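/- Fix integers r ≥ k ≥ 2 and j with 2 ≤ j ≤ k. In the multilinear expansion of ∑_{j'=1}^{k} (2pj'/k) · s_{r,k,j'}(z) (with s as defined from products of z_i and (1-z_i)), the coefficient of any monomial ∏_{i∈J} z_i with |J| = j equals (2p/k) · ∑_{i=1}^{j} (-1)^{j-i} · i · C(j,i), which is 0. -/

import Mathlib

/-!
If `z i` is the success probability of the `i`-th of independent trials, then
`poissonBinomial z K j` is the probability of exactly `j` successes among the trials in `K`, and
the paper's `s_{r,k,j}` is `∑_{|K| = k} poissonBinomial X K j`. Summing `j` times these weights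
gives the expected number of successes, `∑_{i ∈ K} z i`, so the polynomial in question is
homogeneous of degree one and has no monomial of degree `j ≥ 2`. The alternating sum vanishes as
well, since `i * C(j, i) = j * C(j - 1, i - 1)` turns it into `j * (1 - 1) ^ (j - 1)`.
-/

open Finset MvPolynomial

section PoissonBinomial

variable {ι R : Type*} [CommRing R] [DecidableEq ι] (z : ι → R)

theorem sum_powerset_prod_mul_prod_one_sub (s : Finset ι) :
    ∑ t ∈ s.powerset, (∏ i ∈ t, z i) * ∏ i ∈ s \ t, (1 - z i) = 1 := by
  simpa using (prod_add z (fun i => 1 - z i) s).symm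

theorem sum_powerset_card_mul_prod_mul_prod_one_sub (s : Finset ι) :
    ∑ t ∈ s.powerset, (#t : R) * ((∏ i ∈ t, z i) * ∏ i ∈ s \ t, (1 - z i)) = ∑ i ∈ s, z i := by
  induction s using Finset.induction_on with
  | empty => simp
  | insert a s ha ih =>
    set P : Finset ι → R := fun t => (∏ i ∈ t, z i) * ∏ i ∈ s \ t, (1 - z i)
    have hout : ∀ t ∈ s.powerset,
        (#t : R) * ((∏ i ∈ t, z i) * ∏ i ∈ insert a s \ t, (1 - z i)) = (1 - z a) * (#t * P t) := by
      intro t ht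
      have hat : a ∉ t := fun hat => ha (mem_powerset.1 ht hat)
      rw [insert_sdiff_of_notMem s hat, prod_insert (fun h => ha (mem_sdiff.1 h).1)]
      ring
    have hin : ∀ t ∈ s.powerset,
        (#(insert a t) : R) * ((∏ i ∈ insert a t, z i) * ∏ i ∈ insert a s \ insert a t, (1 - z i))
          = z a * (#t * P t) + z a * P t := by
      intro t ht
      have hat : a ∉ t := fun hat => ha (mem_powerset.1 ht hat)
      rw [insert_sdiff_insert, sdiff_insert_of_notMem ha, card_insert_of_notMem hat,
        prod_insert hat]
      push_cast
      ring
    rw [sum_powerset_insert ha, sum_insert ha, ← ih, sum_congr rfl hout, sum_congr rfl hin,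
      sum_add_distrib, ← mul_sum, ← mul_sum, ← mul_sum, sum_powerset_prod_mul_prod_one_sub]
    ring

def poissonBinomial (s : Finset ι) (j : ℕ) : R :=
  ∑ t ∈ powersetCard j s, (∏ i ∈ t, z i) * ∏ i ∈ s \ t, (1 - z i)

theorem sum_Icc_mul_poissonBinomial {s : Finset ι} {k : ℕ} (hs : #s = k) :
    ∑ j ∈ Icc 1 k, (j : R) * poissonBinomial z s j = ∑ i ∈ s, z i := by
  rw [← sum_powerset_card_mul_prod_mul_prod_one_sub z s, sum_powerset, hs]
  have hzero : ∀ j ∈ range (k + 1), j ∉ Icc 1 k → (j : R) * poissonBinomial z s j = 0 := by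
    intro j hj hjIcc
    obtain rfl : j = 0 := by simp only [mem_range, mem_Icc] at hj hjIcc; omega
    rw [Nat.cast_zero, zero_mul]
  rw [sum_subset (fun j hj => mem_range.2 (by simp only [mem_Icc] at hj; omega)) hzero]
  refine sum_congr rfl fun j _ => ?_
  rw [poissonBinomial, mul_sum]
  exact sum_congr rfl fun t ht => by rw [(mem_powersetCard.1 ht).2]

theorem sum_Icc_mul_sum_poissonBinomial {𝒦 : Finset (Finset ι)} {k : ℕ}
    (h𝒦 : ∀ K ∈ 𝒦, #K = k) :
    ∑ j ∈ Icc 1 k, (j : R) * ∑ K ∈ 𝒦, poissonBinomial z K j = ∑ K ∈ 𝒦, ∑ i ∈ K, z i := by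
  simp_rw [mul_sum]
  rw [sum_comm]
  exact sum_congr rfl fun K hK => sum_Icc_mul_poissonBinomial z (h𝒦 K hK)

end PoissonBinomial

theorem sum_Icc_neg_one_pow_mul_mul_choose {R : Type*} [CommRing R] {j : ℕ} (hj : 2 ≤ j) :
    ∑ i ∈ Icc 1 j, (-1 : R) ^ (j - i) * i * j.choose i = 0 := by
  obtain ⟨m, rfl⟩ : ∃ m, j = m + 1 := ⟨j - 1, by omega⟩
  calc ∑ i ∈ Icc 1 (m + 1), (-1 : R) ^ (m + 1 - i) * i * (m + 1).choose i
      = ∑ t ∈ range (m + 1),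
          (-1 : R) ^ (m + 1 - (t + 1)) * (t + 1 : ℕ) * (m + 1).choose (t + 1) := by
        rw [range_eq_Ico, sum_Ico_add' (fun i : ℕ => (-1 : R) ^ (m + 1 - i) * i * (m + 1).choose i),
          ← Ico_add_one_right_eq_Icc]
    _ = (m + 1) * ∑ t ∈ range (m + 1), 1 ^ t * (-1 : R) ^ (m - t) * m.choose t := by
        rw [mul_sum]
        refine sum_congr rfl fun t _ => ?_
        rw [Nat.add_sub_add_right, mul_assoc, ← Nat.cast_mul, mul_comm (t + 1),
          ← Nat.add_one_mul_choose_eq]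
        push_cast
        ring
    _ = 0 := by
        rw [← add_pow]
        simp [show m ≠ 0 by omega]

theorem degree_j_coefficient_vanishes_general (r k j : ℕ)
    (hj : 2 ≤ j) (p : ℝ) (J : Finset (Fin r)) (hJ : J.card = j) :
    MvPolynomial.coeff (∑ i ∈ J, Finsupp.single i 1)
        (∑ j' ∈ Finset.Icc 1 k, MvPolynomial.C (2 * p * (j' : ℝ) / (k : ℝ)) *
          ∑ K ∈ Finset.powersetCard k (Finset.univ : Finset (Fin r)),
            ∑ J' ∈ Finset.powersetCard j' K,
              (∏ i ∈ J', (MvPolynomial.X i : MvPolynomial (Fin r) ℝ)) *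
                ∏ i ∈ K \ J', (1 - MvPolynomial.X i))
        = (2 * p / (k : ℝ)) * ∑ i ∈ Finset.Icc 1 j, (-1 : ℝ) ^ (j - i) * (i : ℝ) * (j.choose i : ℝ)
    ∧ (2 * p / (k : ℝ)) * ∑ i ∈ Finset.Icc 1 j, (-1 : ℝ) ^ (j - i) * (i : ℝ) * (j.choose i : ℝ)
        = 0 := by
  rw [sum_Icc_neg_one_pow_mul_mul_choose hj, mul_zero]
  refine ⟨?_, rfl⟩
  have hlinear : ∑ j' ∈ Icc 1 k, C (2 * p * j' / k) *
        ∑ K ∈ powersetCard k univ, poissonBinomial (X : Fin r → MvPolynomial (Fin r) ℝ) K j'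
      = C (2 * p / k) * ∑ K ∈ powersetCard k univ, ∑ i ∈ K, X i := by
    rw [← sum_Icc_mul_sum_poissonBinomial X fun K hK => (mem_powersetCard.1 hK).2, mul_sum]
    refine sum_congr rfl fun j' _ => ?_
    rw [← mul_assoc, ← map_natCast C, ← map_mul, mul_div_right_comm]
  refine (congrArg (coeff _) hlinear).trans ?_
  have hhom : (C (2 * p / k) * ∑ K ∈ powersetCard k univ, ∑ i ∈ K, X i :
      MvPolynomial (Fin r) ℝ).IsHomogeneous 1 :=
    (IsHomogeneous.sum _ _ _ fun K _ =>
      IsHomogeneous.sum _ _ _ fun i _ => isHomogeneous_X ℝ i).C_mul _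
  refine hhom.coeff_eq_zero ?_
  rw [map_sum]
  simp only [Finsupp.degree_single, sum_const, smul_eq_mul, mul_one, hJ]
  omega

/-- The key coefficient computation of Section 3: in the multilinear expansion of
`∑_{j'=1}^{k} (2pj'/k) s_{r,k,j'}(z)`, the coefficient of any monomial `∏_{i∈J} z_i`
with `|J| = j ≥ 2` equals `(2p/k) ∑_{i=1}^{j} (-1)^{j-i} i C(j,i)`, which is `0`. -/
theorem degree_j_coefficient_vanishes (r k j : ℕ) (hk : 2 ≤ k) (hkr : k ≤ r)
    (hj : 2 ≤ j) (hjk : j ≤ k) (p : ℝ) (J : Finset (Fin r)) (hJ : J.card = j) :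
    MvPolynomial.coeff (∑ i ∈ J, Finsupp.single i 1)
        (∑ j' ∈ Finset.Icc 1 k, MvPolynomial.C (2 * p * (j' : ℝ) / (k : ℝ)) *
          ∑ K ∈ Finset.powersetCard k (Finset.univ : Finset (Fin r)),
            ∑ J' ∈ Finset.powersetCard j' K,
              (∏ i ∈ J', (MvPolynomial.X i : MvPolynomial (Fin r) ℝ)) *
                ∏ i ∈ K \ J', (1 - MvPolynomial.X i))
        = (2 * p / (k : ℝ)) * ∑ i ∈ Finset.Icc 1 j, (-1 : ℝ) ^ (j - i) * (i : ℝ) * (j.choose i : ℝ)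
    ∧ (2 * p / (k : ℝ)) * ∑ i ∈ Finset.Icc 1 j, (-1 : ℝ) ^ (j - i) * (i : ℝ) * (j.choose i : ℝ)
        = 0 :=
  degree_j_coefficient_vanishes_general r k j hj p J hJ
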